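/- For a ∈ (0,1/2] and r ∈ (0,1), the generalized Grötzsch modulus satisfies the Ramanujan derivative formula: dμ_a(r)/dr = −(1/(r(1−r²)))·(1/F(a,1−a;1;r²)²). -/

import Mathlib

/-!
Write `F = F(a, 1 - a; 1; ·) = ∑ dₙ xⁿ`. The recursion `(n + 1)² dₙ₊₁ = (n + a)(n + 1 - a) dₙ` is
the hypergeometric equation in the form `(x (1 - x) F')' = a (1 - a) F`, so the Wronskian-type
expression `W(x) = x (1 - x) (F'(x) F(1 - x) + F(x) F'(1 - x))`, which pairs `F` with its reflection
`F(1 - ·)`, is constant on `(0, 1)`. Its value is read off as `x → 0⁺`: by Abel's theorem,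
`(1 - t) F(t) → lim dₙ = 0` and `t (1 - t) F'(t) → lim n dₙ` as `t → 1⁻`, and Euler's limit formula
for `Γ` together with the reflection formula gives `n dₙ → 1 / (Γ(a) Γ(1 - a)) = sin(πa) / π`.
Differentiating `μ_a(r) = π / (2 sin(πa)) · F(1 - r²) / F(r²)` produces `W(r²)` in the numerator.
-/

noncomputable def GaussF (a b c x : ℝ) : ℝ :=
  ∑' n : ℕ, ((ascPochhammer ℝ n).eval a * (ascPochhammer ℝ n).eval b /
    ((ascPochhammer ℝ n).eval c * n.factorial)) * x ^ n

noncomputable def muA (a r : ℝ) : ℝ :=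
  (Real.pi / (2 * Real.sin (Real.pi * a))) *
    GaussF a (1-a) 1 (1 - r^2) / GaussF a (1-a) 1 (r^2)

open Filter Topology Real

section PowerSeries

variable {c : ℕ → ℝ} {C x : ℝ}

lemma exists_abs_le_of_tendsto {L : ℝ} (hc : Tendsto c atTop (𝓝 L)) : ∃ C, ∀ n, |c n| ≤ C := by
  obtain ⟨C, hC⟩ := isBounded_iff_forall_norm_le.1 (Metric.isBounded_range_of_tendsto c hc)
  exact ⟨C, fun n ↦ hC _ ⟨n, rfl⟩⟩

lemma summable_mul_pow_of_abs_le (hc : ∀ n, |c n| ≤ C) (hx : |x| < 1) :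
    Summable fun n ↦ c n * x ^ n :=
  .of_norm_bounded ((summable_geometric_of_lt_one (abs_nonneg x) hx).mul_left C) fun n ↦ by
    rw [norm_mul, norm_pow, Real.norm_eq_abs, Real.norm_eq_abs]
    exact mul_le_mul_of_nonneg_right (hc n) (by positivity)

lemma hasDerivAt_tsum_mul_pow (hc : ∀ n, |c n| ≤ C) (hx : |x| < 1) :
    HasDerivAt (fun y ↦ ∑' n, c n * y ^ n) (∑' n : ℕ, ((n : ℝ) + 1) * c (n + 1) * x ^ n) x := by
  obtain ⟨ρ, hxρ, hρ1⟩ := exists_between hx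
  have hρ0 : 0 < ρ := (abs_nonneg x).trans_lt hxρ
  have hu : Summable fun n : ℕ ↦ C * (((n : ℝ) + 1) * ρ ^ n) := by
    have := hasSum_choose_mul_geometric_of_norm_lt_one 1 (r := ρ)
      (by rwa [Real.norm_of_nonneg hρ0.le])
    simpa using this.summable.mul_left C
  have hbound : ∀ n, ∀ y ∈ Set.Ioo (-ρ) ρ,
      ‖c (n + 1) * (((n + 1 : ℕ) : ℝ) * y ^ (n + 1 - 1))‖ ≤ C * (((n : ℝ) + 1) * ρ ^ n) := by
    intro n y hy
    have hyρ : |y| ≤ ρ := abs_le.2 ⟨hy.1.le, hy.2.le⟩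
    rw [norm_mul, norm_mul, norm_pow, Real.norm_eq_abs, Real.norm_eq_abs, Real.norm_eq_abs,
      Nat.add_sub_cancel, Nat.abs_cast]
    push_cast
    gcongr
    exacts [(abs_nonneg _).trans (hc 0), hc _]
  -- Differentiate the shifted series `∑ cₙ₊₁ yⁿ⁺¹`, whose termwise derivatives involve no `n - 1`.
  have hshift := hasDerivAt_tsum_of_isPreconnected hu isOpen_Ioo isPreconnected_Ioo
    (g := fun n y ↦ c (n + 1) * y ^ (n + 1))
    (fun n y _ ↦ (hasDerivAt_pow (n + 1) y).const_mul (c (n + 1))) hbound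
    (y₀ := 0) ⟨neg_lt_zero.2 hρ0, hρ0⟩ (by simp) (abs_lt.1 hxρ)
  have heq : (fun y ↦ c 0 + ∑' n, c (n + 1) * y ^ (n + 1)) =ᶠ[𝓝 x]
      fun y ↦ ∑' n, c n * y ^ n := by
    filter_upwards [isOpen_Ioo.mem_nhds (abs_lt.1 hx)] with y hy
    rw [(summable_mul_pow_of_abs_le hc (abs_lt.2 hy)).tsum_eq_zero_add, pow_zero, mul_one]
  refine ((hshift.const_add (c 0)).congr_of_eventuallyEq heq.symm).congr_deriv ?_
  refine tsum_congr fun n ↦ ?_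
  push_cast
  ring

lemma mul_tsum_mul_pow_succ (hc : ∀ n, |c n| ≤ C) (hc0 : c 0 = 0) (hx : |x| < 1) :
    x * ∑' n, c (n + 1) * x ^ n = ∑' n, c n * x ^ n := by
  rw [(summable_mul_pow_of_abs_le hc hx).tsum_eq_zero_add, hc0, ← tsum_mul_left]
  simp only [zero_mul, zero_add, pow_succ]
  exact tsum_congr fun n ↦ by ring

def backwardDiff (c : ℕ → ℝ) : ℕ → ℝ
  | 0 => c 0
  | n + 1 => c (n + 1) - c n

lemma sum_range_succ_backwardDiff (c : ℕ → ℝ) (n : ℕ) :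
    ∑ i ∈ Finset.range (n + 1), backwardDiff c i = c n := by
  induction n with
  | zero => simp [backwardDiff]
  | succ n ih => rw [Finset.sum_range_succ, ih, backwardDiff]; ring

lemma abs_backwardDiff_le (hc : ∀ n, |c n| ≤ C) (n : ℕ) : |backwardDiff c n| ≤ 2 * C := by
  have hC : 0 ≤ C := (abs_nonneg _).trans (hc 0)
  cases n with
  | zero => simp only [backwardDiff]; linarith [hc 0]
  | succ n => simp only [backwardDiff]; linarith [abs_sub (c (n + 1)) (c n), hc n, hc (n + 1)]

lemma tsum_backwardDiff_mul_pow (hc : ∀ n, |c n| ≤ C) (hx : |x| < 1) :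
    ∑' n, backwardDiff c n * x ^ n = (1 - x) * ∑' n, c n * x ^ n := by
  have hS := (summable_mul_pow_of_abs_le hc hx).hasSum
  refine ((hasSum_nat_add_iff' 1).1 ?_).tsum_eq
  convert ((hasSum_nat_add_iff' 1).2 hS).sub (hS.mul_left x) using 1
  · funext n
    simp only [backwardDiff]
    ring
  · simp only [Finset.range_one, backwardDiff, Finset.sum_singleton, pow_zero, mul_one]
    ring

/-- Abel's theorem for the series `∑ (cₙ - cₙ₋₁) xⁿ = (1 - x) ∑ cₙ xⁿ`, whose partial sums are the
`cₙ`. -/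
lemma tendsto_one_sub_mul_tsum_mul_pow {L : ℝ} (hc : Tendsto c atTop (𝓝 L)) :
    Tendsto (fun x ↦ (1 - x) * ∑' n, c n * x ^ n) (𝓝[<] 1) (𝓝 L) := by
  obtain ⟨C, hC⟩ := exists_abs_le_of_tendsto hc
  have hpartial : Tendsto (fun n ↦ ∑ i ∈ Finset.range n, backwardDiff c i) atTop (𝓝 L) :=
    (tendsto_add_atTop_iff_nat 1).1 (by simpa only [sum_range_succ_backwardDiff] using hc)
  refine (Real.tendsto_tsum_powerSeries_nhdsWithin_lt hpartial).congr' ?_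
  filter_upwards [Ioo_mem_nhdsLT (show (0 : ℝ) < 1 by norm_num)] with x hx
  exact tsum_backwardDiff_mul_pow hC (abs_lt.2 ⟨by linarith [hx.1], hx.2⟩)

end PowerSeries

def reflectionWronskian (f f' : ℝ → ℝ) (y : ℝ) : ℝ :=
  y * (1 - y) * (f' y * f (1 - y) + f y * f' (1 - y))

lemma hasDerivAt_reflectionWronskian {f f' : ℝ → ℝ} {k x : ℝ}
    (hf : HasDerivAt f (f' x) x) (hf₁ : HasDerivAt f (f' (1 - x)) (1 - x))
    (hp : HasDerivAt (fun y ↦ y * (1 - y) * f' y) (k * f x) x)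
    (hp₁ : HasDerivAt (fun y ↦ y * (1 - y) * f' y) (k * f (1 - x)) (1 - x)) :
    HasDerivAt (reflectionWronskian f f') 0 x := by
  have hr : HasDerivAt (fun y : ℝ ↦ 1 - y) (-1) x := by
    simpa using (hasDerivAt_id x).const_sub 1
  have key := (hp.mul (hf₁.comp x hr)).add (hf.mul (hp₁.comp x hr))
  have hW : reflectionWronskian f f' = fun y ↦
      y * (1 - y) * f' y * f (1 - y) + f y * ((1 - y) * (1 - (1 - y)) * f' (1 - y)) := by
    funext y
    simp only [reflectionWronskian]
    ring
  rw [hW]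
  exact key.congr_deriv (by simp only [Function.comp_apply]; ring)

lemma ascPochhammer_eval_eq_prod_range {R : Type*} [CommSemiring R] (n : ℕ) (r : R) :
    (ascPochhammer R n).eval r = ∏ j ∈ Finset.range n, (r + j) := by
  induction n with
  | zero => simp
  | succ n ih => rw [ascPochhammer_succ_eval, ih, Finset.prod_range_succ]

lemma Real.GammaSeq_eq_div_ascPochhammer (s : ℝ) (n : ℕ) :
    GammaSeq s n = n ^ s * n.factorial / (ascPochhammer ℝ (n + 1)).eval s := by
  rw [GammaSeq, ascPochhammer_eval_eq_prod_range]

namespace GaussF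

noncomputable def coeff (a b c : ℝ) (n : ℕ) : ℝ :=
  (ascPochhammer ℝ n).eval a * (ascPochhammer ℝ n).eval b /
    ((ascPochhammer ℝ n).eval c * n.factorial)

lemma eq_tsum_coeff (a b c x : ℝ) : GaussF a b c x = ∑' n, coeff a b c n * x ^ n := rfl

lemma coeff_zero (a b c : ℝ) : coeff a b c 0 = 1 := by simp [coeff]

lemma apply_zero (a b c : ℝ) : GaussF a b c 0 = 1 := by
  rw [eq_tsum_coeff, tsum_eq_single 0 fun n hn ↦ by rw [zero_pow hn, mul_zero]]
  simp [coeff_zero]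

lemma coeff_pos {a b c : ℝ} (ha : 0 < a) (hb : 0 < b) (hc : 0 < c) (n : ℕ) :
    0 < coeff a b c n := by
  have := ascPochhammer_pos n a ha
  have := ascPochhammer_pos n b hb
  have := ascPochhammer_pos n c hc
  unfold coeff
  positivity

lemma succ_mul_add_mul_coeff_succ (a b : ℝ) {c : ℝ} (hc : 0 < c) (n : ℕ) :
    ((n : ℝ) + 1) * (n + c) * coeff a b c (n + 1) = (n + a) * (n + b) * coeff a b c n := by
  have := (ascPochhammer_pos n c hc).ne'
  have : (n : ℝ) + c ≠ 0 := by positivity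
  simp only [coeff, ascPochhammer_succ_eval, Nat.factorial_succ]
  push_cast
  field_simp
  ring

variable {a : ℝ}

lemma succ_mul_coeff_succ_eq_div_GammaSeq (ha0 : 0 < a) (ha1 : a < 1) {n : ℕ} (hn : 0 < n) :
    ((n : ℝ) + 1) * coeff a (1 - a) 1 (n + 1) =
      n / (n + 1) / (GammaSeq a n * GammaSeq (1 - a) n) := by
  have hn' : (0 : ℝ) < n := by exact_mod_cast hn
  have := (ascPochhammer_pos (n + 1) a ha0).ne'
  have := (ascPochhammer_pos (n + 1) (1 - a) (by linarith)).ne'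
  have hpow : (n : ℝ) ^ a * (n : ℝ) ^ (1 - a) = n := by
    rw [← rpow_add hn', add_sub_cancel, rpow_one]
  rw [coeff, GammaSeq_eq_div_ascPochhammer, GammaSeq_eq_div_ascPochhammer, div_mul_div_comm,
    mul_mul_mul_comm, hpow, ascPochhammer_eval_one, Nat.factorial_succ]
  push_cast
  field_simp

lemma tendsto_natCast_mul_coeff (ha0 : 0 < a) (ha1 : a < 1) :
    Tendsto (fun n : ℕ ↦ n * coeff a (1 - a) 1 n) atTop (𝓝 (sin (π * a) / π)) := by
  rw [← tendsto_add_atTop_iff_nat 1]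
  have hΓ : Gamma a * Gamma (1 - a) ≠ 0 :=
    (mul_pos (Gamma_pos_of_pos ha0) (Gamma_pos_of_pos (by linarith))).ne'
  have hlim := (tendsto_natCast_div_add_atTop (1 : ℝ)).div
    ((GammaSeq_tendsto_Gamma a).mul (GammaSeq_tendsto_Gamma (1 - a))) hΓ
  rw [Gamma_mul_Gamma_one_sub, one_div_div] at hlim
  refine hlim.congr' ?_
  filter_upwards [eventually_gt_atTop 0] with n hn
  rw [Pi.div_apply, ← succ_mul_coeff_succ_eq_div_GammaSeq ha0 ha1 hn]
  push_cast
  rfl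

lemma tendsto_coeff_zero (ha0 : 0 < a) (ha1 : a < 1) :
    Tendsto (coeff a (1 - a) 1) atTop (𝓝 0) := by
  have := (tendsto_natCast_mul_coeff ha0 ha1).div_atTop tendsto_natCast_atTop_atTop
  refine this.congr' ?_
  filter_upwards [eventually_gt_atTop 0] with n hn
  exact mul_div_cancel_left₀ _ (Nat.cast_ne_zero.2 hn.ne')

lemma hasDerivAt_zeroBalanced (ha0 : 0 < a) (ha1 : a < 1) {x : ℝ} (hx : |x| < 1) :
    HasDerivAt (GaussF a (1 - a) 1)
      (∑' n : ℕ, ((n : ℝ) + 1) * coeff a (1 - a) 1 (n + 1) * x ^ n) x := by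
  obtain ⟨C, hC⟩ := exists_abs_le_of_tendsto (tendsto_coeff_zero ha0 ha1)
  exact hasDerivAt_tsum_mul_pow hC hx

lemma differentiableAt_zeroBalanced (ha0 : 0 < a) (ha1 : a < 1) {x : ℝ} (hx : |x| < 1) :
    DifferentiableAt ℝ (GaussF a (1 - a) 1) x :=
  (hasDerivAt_zeroBalanced ha0 ha1 hx).differentiableAt

lemma one_le_zeroBalanced (ha0 : 0 < a) (ha1 : a < 1) {x : ℝ} (hx0 : 0 ≤ x) (hx1 : x < 1) :
    1 ≤ GaussF a (1 - a) 1 x := by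
  obtain ⟨C, hC⟩ := exists_abs_le_of_tendsto (tendsto_coeff_zero ha0 ha1)
  have hsum := summable_mul_pow_of_abs_le hC (abs_lt.2 ⟨by linarith, hx1⟩)
  rw [eq_tsum_coeff]
  simpa [coeff_zero] using hsum.le_tsum 0 fun n _ ↦
    mul_nonneg (coeff_pos ha0 (by linarith) one_pos n).le (pow_nonneg hx0 n)

lemma mul_one_sub_mul_deriv_zeroBalanced (ha0 : 0 < a) (ha1 : a < 1) {x : ℝ} (hx : |x| < 1) :
    x * (1 - x) * deriv (GaussF a (1 - a) 1) x =
      (1 - x) * ∑' n : ℕ, n * coeff a (1 - a) 1 n * x ^ n := by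
  obtain ⟨C, hC⟩ := exists_abs_le_of_tendsto (tendsto_natCast_mul_coeff ha0 ha1)
  rw [(hasDerivAt_zeroBalanced ha0 ha1 hx).deriv, ← mul_tsum_mul_pow_succ hC (by simp) hx]
  push_cast
  ring

lemma hasDerivAt_mul_one_sub_mul_deriv_zeroBalanced (ha0 : 0 < a) (ha1 : a < 1) {x : ℝ}
    (hx : |x| < 1) :
    HasDerivAt (fun y ↦ y * (1 - y) * deriv (GaussF a (1 - a) 1) y)
      (a * (1 - a) * GaussF a (1 - a) 1 x) x := by
  set m : ℕ → ℝ := fun n ↦ n * coeff a (1 - a) 1 n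
  obtain ⟨C, hC⟩ := exists_abs_le_of_tendsto (tendsto_natCast_mul_coeff ha0 ha1)
  have heq : (fun y ↦ ∑' n, backwardDiff m n * y ^ n) =ᶠ[𝓝 x]
      fun y ↦ y * (1 - y) * deriv (GaussF a (1 - a) 1) y := by
    filter_upwards [isOpen_Ioo.mem_nhds (abs_lt.1 hx)] with y hy
    rw [mul_one_sub_mul_deriv_zeroBalanced ha0 ha1 (abs_lt.2 hy),
      tsum_backwardDiff_mul_pow hC (abs_lt.2 hy)]
  refine ((hasDerivAt_tsum_mul_pow (abs_backwardDiff_le hC) hx).congr_of_eventuallyEq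
    heq.symm).congr_deriv ?_
  rw [eq_tsum_coeff, ← tsum_mul_left]
  refine tsum_congr fun n ↦ ?_
  have hrec := succ_mul_add_mul_coeff_succ a (1 - a) one_pos n
  simp only [backwardDiff]
  push_cast
  linear_combination x ^ n * hrec

lemma tendsto_reflectionWronskian_zeroBalanced (ha0 : 0 < a) (ha1 : a < 1) :
    Tendsto (reflectionWronskian (GaussF a (1 - a) 1) (deriv (GaussF a (1 - a) 1))) (𝓝[>] 0)
      (𝓝 (sin (π * a) / π)) := by
  set F' := fun y : ℝ ↦ ∑' n : ℕ, ((n : ℝ) + 1) * coeff a (1 - a) 1 (n + 1) * y ^ n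
  have hreflect : Tendsto (fun y : ℝ ↦ 1 - y) (𝓝[>] 0) (𝓝[<] 1) := by
    have h := (map_subLeft_nhdsGT (c := (1 : ℝ)) (a := 0)).le
    rw [sub_zero] at h
    exact h
  have hF'cont : ContinuousAt F' 0 := by
    obtain ⟨C, hC⟩ := exists_abs_le_of_tendsto
      ((tendsto_add_atTop_iff_nat 1).2 (tendsto_natCast_mul_coeff ha0 ha1))
    refine (hasDerivAt_tsum_mul_pow hC (by simp)).continuousAt.congr (.of_forall fun y ↦ ?_)
    push_cast
    rfl
  have hF0 : Tendsto (GaussF a (1 - a) 1) (𝓝[>] 0) (𝓝 1) := by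
    have h := (hasDerivAt_zeroBalanced ha0 ha1 (x := 0) (by simp)).continuousAt.tendsto
    rw [apply_zero] at h
    exact h.mono_left nhdsWithin_le_nhds
  have hF'0 : Tendsto (fun y ↦ (1 - y) * F' y) (𝓝[>] 0) (𝓝 ((1 - 0) * F' 0)) :=
    ((continuousAt_const.sub continuousAt_id).mul hF'cont).tendsto.mono_left nhdsWithin_le_nhds
  have hF1 := (tendsto_one_sub_mul_tsum_mul_pow (tendsto_coeff_zero ha0 ha1)).comp hreflect
  have hP1 := (tendsto_one_sub_mul_tsum_mul_pow (tendsto_natCast_mul_coeff ha0 ha1)).comp hreflect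
  have hlim := (hF'0.mul hF1).add (hF0.mul hP1)
  rw [mul_zero, zero_add, one_mul] at hlim
  refine hlim.congr' ?_
  filter_upwards [Ioo_mem_nhdsGT (show (0 : ℝ) < 1 from one_pos)] with y hy
  have hy₀ : |y| < 1 := abs_lt.2 ⟨by linarith [hy.1], hy.2⟩
  have hy₁ : |1 - y| < 1 := abs_lt.2 ⟨by linarith [hy.2], by linarith [hy.1]⟩
  have hP := mul_one_sub_mul_deriv_zeroBalanced ha0 ha1 hy₁
  rw [sub_sub_cancel] at hP
  simp only [Function.comp_apply, reflectionWronskian]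
  rw [(hasDerivAt_zeroBalanced ha0 ha1 hy₀).deriv, sub_sub_cancel, ← eq_tsum_coeff]
  linear_combination -GaussF a (1 - a) 1 y * hP

lemma reflectionWronskian_zeroBalanced (ha0 : 0 < a) (ha1 : a < 1) {x : ℝ}
    (hx : x ∈ Set.Ioo (0 : ℝ) 1) :
    reflectionWronskian (GaussF a (1 - a) 1) (deriv (GaussF a (1 - a) 1)) x =
      sin (π * a) / π := by
  have hderiv : ∀ y ∈ Set.Ioo (0 : ℝ) 1,
      HasDerivAt (reflectionWronskian (GaussF a (1 - a) 1) (deriv (GaussF a (1 - a) 1))) 0 y := by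
    intro y hy
    have hy₀ : |y| < 1 := abs_lt.2 ⟨by linarith [hy.1], hy.2⟩
    have hy₁ : |1 - y| < 1 := abs_lt.2 ⟨by linarith [hy.2], by linarith [hy.1]⟩
    exact hasDerivAt_reflectionWronskian
      (differentiableAt_zeroBalanced ha0 ha1 hy₀).hasDerivAt
      (differentiableAt_zeroBalanced ha0 ha1 hy₁).hasDerivAt
      (hasDerivAt_mul_one_sub_mul_deriv_zeroBalanced ha0 ha1 hy₀)
      (hasDerivAt_mul_one_sub_mul_deriv_zeroBalanced ha0 ha1 hy₁)
  refine tendsto_nhds_unique (tendsto_const_nhds.congr' ?_)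
    (tendsto_reflectionWronskian_zeroBalanced ha0 ha1)
  filter_upwards [Ioo_mem_nhdsGT (show (0 : ℝ) < 1 from one_pos)] with y hy
  exact isOpen_Ioo.is_const_of_deriv_eq_zero isPreconnected_Ioo
    (fun z hz ↦ (hderiv z hz).differentiableAt.differentiableWithinAt)
    (fun z hz ↦ (hderiv z hz).deriv) hx hy

end GaussF

theorem ramanujan_derivative_formula (a : ℝ) (ha : a ∈ Set.Ioc (0:ℝ) (1/2))
    (r : ℝ) (hr : r ∈ Set.Ioo (0:ℝ) 1) :
    HasDerivAt (muA a)
      (-(1 / (r * (1 - r^2))) * (1 / (GaussF a (1-a) 1 (r^2))^2)) r := by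
  obtain ⟨ha0, ha2⟩ := ha
  have ha1 : a < 1 := by linarith
  have hx : r ^ 2 ∈ Set.Ioo (0 : ℝ) 1 := ⟨pow_pos hr.1 2, pow_lt_one₀ hr.1.le hr.2 two_ne_zero⟩
  have hW := GaussF.reflectionWronskian_zeroBalanced ha0 ha1 hx
  rw [reflectionWronskian, eq_div_iff pi_ne_zero] at hW
  set F := GaussF a (1 - a) 1
  have hF₀ : HasDerivAt F (deriv F (r ^ 2)) (r ^ 2) := (GaussF.differentiableAt_zeroBalanced
    ha0 ha1 (abs_lt.2 ⟨by linarith [hx.1], hx.2⟩)).hasDerivAt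
  have hF₁ : HasDerivAt F (deriv F (1 - r ^ 2)) (1 - r ^ 2) := (GaussF.differentiableAt_zeroBalanced
    ha0 ha1 (abs_lt.2 ⟨by linarith [hx.2], by linarith [hx.1]⟩)).hasDerivAt
  have hsq : HasDerivAt (fun s : ℝ ↦ s ^ 2) (2 * r) r := by simpa using hasDerivAt_pow 2 r
  have hnum := (hF₁.comp r (hsq.const_sub 1)).const_mul (π / (2 * sin (π * a)))
  have hden := HasDerivAt.comp (h := fun s : ℝ ↦ s ^ 2) r hF₀ hsq
  have hFpos : 0 < F (r ^ 2) :=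
    one_pos.trans_le (GaussF.one_le_zeroBalanced ha0 ha1 hx.1.le hx.2)
  have hsin : 0 < sin (π * a) :=
    sin_pos_of_pos_of_lt_pi (mul_pos pi_pos ha0) (by nlinarith [pi_pos])
  refine (hnum.div hden hFpos.ne').congr_deriv ?_
  have hr0 : r ≠ 0 := hr.1.ne'
  have hr1 : 1 - r ^ 2 ≠ 0 := (sub_pos.2 hx.2).ne'
  simp only [Function.comp_apply]
  field_simp
  linear_combination -hW
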